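/- arXiv:2004.04479 — 7 statements merged into one kernel-verified Lean document; each statement's English description precedes it below -/
import Mathlib

section
/- (Existence of adversarial examples, Theorem 1) Let F : B_n → R be a classification map and let (x, l) be drawn from a probability distribution on B_n × L with conditional density p_A = p(·| l = A) for some label A. Assume: (A1) a set C_A is contained in B_n(r_A, x_A) with 0 < r_A < 1; (A2) F(x) = A for all x ∈ C_A, and there is Δ > 0 such that every point x on the sphere S_{n-1}(r_A, x_A) has a point y(x) with F(y(x)) ≠ A and ‖y(x) − x‖ ≤ Δ; (A3) p_A(x) ≤ C/(V_n(B_n) r_A^n) on B_n(r_A, x_A) and ∫_{C_A} p_A ≥ ν > 0. Then for any ε ∈ (0, r_A), the probability that x admits an (ε+Δ)-adversarial example is at least P(A) · max{ν − C(1 − ε/r_A)^n, 0}. -/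
open MeasureTheory Metric Module

/-!
Radial projection moves a point of `C_A` lying outside the ball `B(x_A, r_A - ε)` onto the
sphere `S(r_A, x_A)` by at most `ε`, and from there A2 reaches a point of another class within
`Δ`: every such point admits an `(ε + Δ)`-adversarial example. The remaining core
`C_A ∩ B(x_A, r_A - ε)` carries `p_A`-mass at most `C ((r_A - ε) / r_A)^n`, by the density bound
of A3 and the scaling `vol B(r) = r^n vol B(1)`; so the outer part of `C_A` carries mass at least
`ν - C (1 - ε / r_A)^n`, and its joint probability with the label `A` is `P(A)` times that.
-/

section Sphere
variable {E : Type*} [NormedAddCommGroup E] [NormedSpace ℝ E]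

theorem exists_mem_sphere_norm_sub_le_of_mem_annulus {c x : E} {r ε : ℝ} (hεr : ε < r)
    (hx : x ∈ closedBall c r \ ball c (r - ε)) : ∃ z ∈ sphere c r, ‖x - z‖ ≤ ε := by
  obtain ⟨hxr, hxε⟩ := hx
  rw [mem_closedBall, dist_eq_norm] at hxr
  rw [mem_ball, dist_eq_norm, not_lt] at hxε
  have ht : 0 < ‖x - c‖ := by linarith
  refine ⟨c + (r / ‖x - c‖) • (x - c), ?_, ?_⟩
  · rw [mem_sphere, dist_eq_norm, add_sub_cancel_left, norm_smul, Real.norm_eq_abs,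
      abs_of_pos (div_pos (by linarith) ht), div_mul_cancel₀ _ ht.ne']
  · have hxz : x - (c + (r / ‖x - c‖) • (x - c)) = (1 - r / ‖x - c‖) • (x - c) := by
      rw [sub_smul, one_smul]; abel
    have hratio : 1 ≤ r / ‖x - c‖ := (one_le_div ht).mpr hxr
    rw [hxz, norm_smul, Real.norm_eq_abs, abs_of_nonpos (by linarith), neg_sub, sub_mul,
      div_mul_cancel₀ _ ht.ne', one_mul]
    linarith

theorem exists_ne_norm_sub_le_of_mem_annulus {L : Type*} {F : E → L} {A : L} {D : Set E}
    {c x : E} {r ε Δ : ℝ}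
    (hboundary : ∀ z ∈ sphere c r, ∃ y ∈ D, F y ≠ A ∧ ‖y - z‖ ≤ Δ) (hεr : ε < r)
    (hFx : F x = A) (hx : x ∈ closedBall c r \ ball c (r - ε)) :
    ∃ y ∈ D, F y ≠ F x ∧ ‖x - y‖ ≤ ε + Δ := by
  obtain ⟨z, hz, hxz⟩ := exists_mem_sphere_norm_sub_le_of_mem_annulus hεr hx
  obtain ⟨y, hyD, hFy, hyz⟩ := hboundary z hz
  refine ⟨y, hyD, hFx ▸ hFy, ?_⟩
  calc ‖x - y‖ ≤ ‖x - z‖ + ‖z - y‖ := norm_sub_le_norm_sub_add_norm_sub x z y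
    _ ≤ ε + Δ := add_le_add hxz (norm_sub_rev z y ▸ hyz)

end Sphere

section Density
variable {E : Type*} [NormedAddCommGroup E] [NormedSpace ℝ E] [FiniteDimensional ℝ E]
  [MeasurableSpace E] [BorelSpace E] {μ : Measure E} [μ.IsAddHaarMeasure]

theorem setIntegral_closedBall_le_of_le_div_volume {f : E → ℝ} {c : E} {r s K : ℝ}
    (hf : IntegrableOn f (closedBall c s) μ) (hr : 0 < r) (hs : 0 ≤ s) (hsr : s ≤ r)
    (hbound : ∀ x ∈ closedBall c r,
      f x ≤ K / (μ.real (closedBall 0 1) * r ^ finrank ℝ E)) :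
    ∫ x in closedBall c s, f x ∂μ ≤ K * (s / r) ^ finrank ℝ E := by
  have hV : 0 < μ.real (closedBall (0 : E) 1) := ENNReal.toReal_pos (measure_closedBall_pos μ 0 one_pos).ne' measure_closedBall_lt_top.ne
  calc ∫ x in closedBall c s, f x ∂μ
      ≤ ∫ _ in closedBall c s, K / (μ.real (closedBall 0 1) * r ^ finrank ℝ E) ∂μ :=
        setIntegral_mono_on hf (integrableOn_const measure_closedBall_lt_top.ne)
          measurableSet_closedBall fun x hx => hbound x (closedBall_subset_closedBall hsr hx)
    _ = K * (s / r) ^ finrank ℝ E := by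
        rw [setIntegral_const, smul_eq_mul, Measure.addHaar_real_closedBall' μ c hs, div_pow]
        field_simp

end Density

theorem stmt_4_general (n : ℕ)
    (L : Type*) [MeasurableSpace L] (A : L)
    (F : EuclideanSpace ℝ (Fin n) → L)
    (μ : Measure (EuclideanSpace ℝ (Fin n) × L))
    (pA : EuclideanSpace ℝ (Fin n) → ℝ) (PA : ℝ)
    (xA : EuclideanSpace ℝ (Fin n)) (CA : Set (EuclideanSpace ℝ (Fin n)))
    (C rA ν Δ ε : ℝ)
    -- the marginal probability of label `A` and the conditional density of `x` given `l = A`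
    (hPA : PA = (μ ((Set.univ : Set (EuclideanSpace ℝ (Fin n))) ×ˢ {A})).toReal)
    (hpApos : ∀ x, 0 ≤ pA x) (hpAint : Integrable pA)
    (hdens : ∀ S : Set (EuclideanSpace ℝ (Fin n)), MeasurableSet S →
      μ (S ×ˢ {A}) = ENNReal.ofReal (PA * ∫ x in S, pA x))
    -- A1
    (hrA0 : 0 < rA) (hCAsub : CA ⊆ closedBall xA rA)
    (hCAmeas : MeasurableSet CA)
    -- A2
    (hclass : ∀ x ∈ CA, F x = A)
    (hboundary : ∀ x ∈ sphere xA rA,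
      ∃ y ∈ closedBall (0 : EuclideanSpace ℝ (Fin n)) 1, F y ≠ A ∧ ‖y - x‖ ≤ Δ)
    -- A3
    (hbound : ∀ x ∈ closedBall xA rA,
      pA x ≤ C / ((volume (closedBall (0 : EuclideanSpace ℝ (Fin n)) 1)).toReal * rA ^ n))
    (hmass : ν ≤ ∫ x in CA, pA x)
    (hε : 0 < ε) (hεr : ε < rA) :
    ENNReal.ofReal (PA * max (ν - C * (1 - ε / rA) ^ n) 0)
      ≤ μ {q : EuclideanSpace ℝ (Fin n) × L |
            ∃ y ∈ closedBall (0 : EuclideanSpace ℝ (Fin n)) 1,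
              F y ≠ F q.1 ∧ ‖q.1 - y‖ ≤ ε + Δ} := by
  set S := CA \ ball xA (rA - ε)
  have hS : MeasurableSet S := hCAmeas.diff measurableSet_ball
  have hcore : ∫ x in CA ∩ ball xA (rA - ε), pA x ≤ C * (1 - ε / rA) ^ n := by
    have hball := setIntegral_closedBall_le_of_le_div_volume (μ := volume) hpAint.integrableOn
      hrA0 (sub_nonneg.mpr hεr.le) (sub_le_self rA hε.le)
      (by simpa only [finrank_euclideanSpace_fin, measureReal_def] using hbound)
    rw [finrank_euclideanSpace_fin, ← one_sub_div hrA0.ne'] at hball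
    exact (setIntegral_mono_set hpAint.integrableOn (ae_of_all _ hpApos)
      (Set.inter_subset_right.trans ball_subset_closedBall).eventuallyLE).trans hball
  have hmassS : max (ν - C * (1 - ε / rA) ^ n) 0 ≤ ∫ x in S, pA x := by
    refine max_le ?_ (setIntegral_nonneg hS fun x _ => hpApos x)
    linarith [integral_inter_add_sdiff (measurableSet_ball (x := xA) (ε := rA - ε))
      (hpAint.integrableOn (s := CA))]
  have hPA0 : 0 ≤ PA := hPA ▸ ENNReal.toReal_nonneg
  calc ENNReal.ofReal (PA * max (ν - C * (1 - ε / rA) ^ n) 0)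
      ≤ ENNReal.ofReal (PA * ∫ x in S, pA x) := by gcongr
    _ = μ (S ×ˢ {A}) := (hdens S hS).symm
    _ ≤ _ := by
      refine measure_mono ?_
      rintro ⟨x, l⟩ ⟨hx, -⟩
      exact exists_ne_norm_sub_le_of_mem_annulus hboundary hεr (hclass x hx.1)
        ⟨hCAsub hx.1, hx.2⟩

/-- Theorem 1 (existence of adversarial examples). Under assumptions A1–A3, for any
`ε ∈ (0, r_A)`, the probability that a sample `(x, l)` admits an `(ε+Δ)`-adversarial example
is at least `P(A) · max {ν − C (1 − ε/r_A)^n, 0}`. -/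
theorem stmt_4 (n : ℕ) (hn : 1 ≤ n)
    (L : Type*) [MeasurableSpace L] (A : L)
    (F : EuclideanSpace ℝ (Fin n) → L)
    (μ : Measure (EuclideanSpace ℝ (Fin n) × L)) [IsProbabilityMeasure μ]
    (pA : EuclideanSpace ℝ (Fin n) → ℝ) (PA : ℝ)
    (xA : EuclideanSpace ℝ (Fin n)) (CA : Set (EuclideanSpace ℝ (Fin n)))
    (C rA ν Δ ε : ℝ)
    -- the marginal probability of label `A` and the conditional density of `x` given `l = A`
    (hPA : PA = (μ ((Set.univ : Set (EuclideanSpace ℝ (Fin n))) ×ˢ {A})).toReal)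
    (hpAmeas : Measurable pA) (hpApos : ∀ x, 0 ≤ pA x) (hpAint : Integrable pA)
    (hpAprob : ∫ x, pA x = 1)
    (hdens : ∀ S : Set (EuclideanSpace ℝ (Fin n)), MeasurableSet S →
      μ (S ×ˢ {A}) = ENNReal.ofReal (PA * ∫ x in S, pA x))
    -- A1
    (hxA : xA ∈ closedBall (0 : EuclideanSpace ℝ (Fin n)) 1)
    (hrA0 : 0 < rA) (hrA1 : rA < 1) (hCAsub : CA ⊆ closedBall xA rA)
    (hCAmeas : MeasurableSet CA)
    -- A2
    (hclass : ∀ x ∈ CA, F x = A) (hΔ : 0 < Δ)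
    (hboundary : ∀ x ∈ sphere xA rA,
      ∃ y ∈ closedBall (0 : EuclideanSpace ℝ (Fin n)) 1, F y ≠ A ∧ ‖y - x‖ ≤ Δ)
    -- A3
    (hC : 0 < C) (hν0 : 0 < ν) (hν1 : ν ≤ 1)
    (hbound : ∀ x ∈ closedBall xA rA,
      pA x ≤ C / ((volume (closedBall (0 : EuclideanSpace ℝ (Fin n)) 1)).toReal * rA ^ n))
    (hmass : ν ≤ ∫ x in CA, pA x)
    (hε : 0 < ε) (hεr : ε < rA) :
    ENNReal.ofReal (PA * max (ν - C * (1 - ε / rA) ^ n) 0)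
      ≤ μ {q : EuclideanSpace ℝ (Fin n) × L |
            ∃ y ∈ closedBall (0 : EuclideanSpace ℝ (Fin n)) 1,
              F y ≠ F q.1 ∧ ‖q.1 - y‖ ≤ ε + Δ} :=
  stmt_4_general n L A F μ pA PA xA CA C rA ν Δ ε hPA hpApos hpAint hdens hrA0 hCAsub hCAmeas hclass
    hboundary hbound hmass hε hεr
end

section
/- Under the hypotheses of the adversarial-example theorem (conditions A1–A3), the probability that x admits an (ε+Δ)-adversarial example is at least P(A) · max{ν − C exp(−nε/r_A), 0}. -/
open MeasureTheory Metric

/-!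
Points of `C_A` at distance at least `r_A - ε` from `x_A` are within `ε` of the sphere
`S(x_A, r_A)`, so by A2 they are within `ε + Δ` of a point with a different label. The remaining
part of `C_A` lies in the ball of radius `r_A - ε`, whose volume is a fraction
`(1 - ε/r_A)^n ≤ exp(-nε/r_A)` of that of `B(x_A, r_A)`; by A3 it carries `p_A`-mass at most
`C exp(-nε/r_A)`, leaving mass at least `ν - C exp(-nε/r_A)` for the adversarially vulnerable part.
-/

theorem div_pow_le_exp_neg {r ε : ℝ} (hr : 0 < r) (hεr : ε ≤ r) (d : ℕ) :
    ((r - ε) / r) ^ d ≤ Real.exp (-(d * ε / r)) := by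
  have hsub : (r - ε) / r = 1 - ε / r := by field_simp
  calc ((r - ε) / r) ^ d ≤ Real.exp (-(ε / r)) ^ d := by
        refine pow_le_pow_left₀ (div_nonneg (by linarith) hr.le) ?_ d
        rw [hsub]
        linarith [Real.add_one_le_exp (-(ε / r))]
    _ = Real.exp (-(d * ε / r)) := by
        rw [← Real.exp_nat_mul]
        ring_nf

section RadialProjection

variable {E : Type*} [NormedAddCommGroup E] [NormedSpace ℝ E]

theorem exists_mem_sphere_dist_eq {x c : E} (hx : x ≠ c) {r : ℝ} (hr : 0 ≤ r) :
    ∃ z ∈ sphere c r, dist x z = |r - dist x c| := by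
  have hd : 0 < ‖x - c‖ := norm_pos_iff.2 (sub_ne_zero.2 hx)
  refine ⟨c + (r / ‖x - c‖) • (x - c), ?_, ?_⟩
  · rw [mem_sphere, dist_eq_norm, add_sub_cancel_left, norm_smul, Real.norm_eq_abs,
      abs_of_nonneg (div_nonneg hr hd.le), div_mul_cancel₀ r hd.ne']
  · rw [dist_eq_norm, dist_eq_norm, abs_sub_comm,
      show x - (c + (r / ‖x - c‖) • (x - c)) = (1 - r / ‖x - c‖) • (x - c) by
        rw [sub_smul, one_smul]; abel,
      norm_smul, Real.norm_eq_abs, ← abs_of_pos hd, ← abs_mul, abs_of_pos hd, sub_mul, one_mul,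
      div_mul_cancel₀ r hd.ne']

theorem exists_ne_near_of_forall_sphere {L : Type*} {F : E → L} {A : L} {D : Set E} {c x : E}
    {r ε Δ : ℝ} (hboundary : ∀ z ∈ sphere c r, ∃ y ∈ D, F y ≠ A ∧ ‖y - z‖ ≤ Δ)
    (hεr : ε < r) (hxε : r - ε ≤ dist x c) (hxr : dist x c ≤ r) (hFx : F x = A) :
    ∃ y ∈ D, F y ≠ F x ∧ ‖x - y‖ ≤ ε + Δ := by
  have hxc : x ≠ c := dist_pos.1 (by linarith)
  obtain ⟨z, hz, hxz⟩ := exists_mem_sphere_dist_eq hxc (dist_nonneg.trans hxr)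
  rw [abs_of_nonneg (sub_nonneg.2 hxr)] at hxz
  obtain ⟨y, hyD, hyA, hyz⟩ := hboundary z hz
  refine ⟨y, hyD, hFx ▸ hyA, ?_⟩
  rw [← dist_eq_norm] at hyz ⊢
  linarith [dist_triangle x z y, dist_comm y z]

end RadialProjection

section DensityBound

open Module

variable {E : Type*} [NormedAddCommGroup E] [NormedSpace ℝ E] [FiniteDimensional ℝ E]
  [MeasurableSpace E] [BorelSpace E] (μ : Measure E) [μ.IsAddHaarMeasure]
  {p : E → ℝ} {s : Set E} {c : E}

theorem setIntegral_le_of_subset_closedBall {ρ K : ℝ} (hρ : 0 ≤ ρ) (hK : 0 ≤ K)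
    (hs : s ⊆ closedBall c ρ) (hp : ∀ x ∈ s, ‖p x‖ ≤ K) :
    ∫ x in s, p x ∂μ ≤ K * (ρ ^ finrank ℝ E * μ.real (closedBall 0 1)) := by
  have hfin : μ s < ⊤ := (measure_mono hs).trans_lt measure_closedBall_lt_top
  calc ∫ x in s, p x ∂μ ≤ K * μ.real s :=
        (le_abs_self _).trans (norm_setIntegral_le_of_norm_le_const hfin hp)
    _ ≤ K * μ.real (closedBall c ρ) :=
        mul_le_mul_of_nonneg_left (measureReal_mono hs measure_closedBall_lt_top.ne) hK
    _ = K * (ρ ^ finrank ℝ E * μ.real (closedBall 0 1)) := by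
        rw [Measure.addHaar_real_closedBall' μ c hρ]

theorem setIntegral_le_exp_of_subset_closedBall {r ε C : ℝ} (hr : 0 < r) (hεr : ε ≤ r)
    (hC : 0 ≤ C) (hs : s ⊆ closedBall c (r - ε))
    (hp : ∀ x ∈ s, ‖p x‖ ≤ C / (μ.real (closedBall 0 1) * r ^ finrank ℝ E)) :
    ∫ x in s, p x ∂μ ≤ C * Real.exp (-(finrank ℝ E * ε / r)) := by
  have hV : 0 < μ.real (closedBall (0 : E) 1) :=
    ENNReal.toReal_pos (measure_closedBall_pos μ 0 one_pos).ne' measure_closedBall_lt_top.ne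
  have hK : 0 ≤ C / (μ.real (closedBall 0 1) * r ^ finrank ℝ E) := by positivity
  calc ∫ x in s, p x ∂μ
      ≤ C / (μ.real (closedBall 0 1) * r ^ finrank ℝ E)
          * ((r - ε) ^ finrank ℝ E * μ.real (closedBall 0 1)) :=
        setIntegral_le_of_subset_closedBall μ (by linarith) hK hs hp
    _ = C * ((r - ε) / r) ^ finrank ℝ E := by
        rw [div_pow]
        field_simp
    _ ≤ C * Real.exp (-(finrank ℝ E * ε / r)) :=
        mul_le_mul_of_nonneg_left (div_pow_le_exp_neg hr hεr _) hC

end DensityBound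
theorem stmt_5_general (n : ℕ)
    (L : Type*) [MeasurableSpace L] (A : L)
    (F : EuclideanSpace ℝ (Fin n) → L)
    (μ : Measure (EuclideanSpace ℝ (Fin n) × L)) [IsProbabilityMeasure μ]
    (pA : EuclideanSpace ℝ (Fin n) → ℝ) (PA : ℝ)
    (xA : EuclideanSpace ℝ (Fin n)) (CA : Set (EuclideanSpace ℝ (Fin n)))
    (C rA ν Δ ε : ℝ)
    -- the marginal probability of label `A` and the conditional density of `x` given `l = A`
    (hPA : PA = (μ ((Set.univ : Set (EuclideanSpace ℝ (Fin n))) ×ˢ {A})).toReal)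
    (hpApos : ∀ x, 0 ≤ pA x) (hpAint : Integrable pA)
    (hdens : ∀ S : Set (EuclideanSpace ℝ (Fin n)), MeasurableSet S →
      μ (S ×ˢ {A}) = ENNReal.ofReal (PA * ∫ x in S, pA x))
    -- A1
    (hrA0 : 0 < rA) (hCAsub : CA ⊆ closedBall xA rA)
    (hCAmeas : MeasurableSet CA)
    -- A2
    (hclass : ∀ x ∈ CA, F x = A)
    (hboundary : ∀ x ∈ sphere xA rA,
      ∃ y ∈ closedBall (0 : EuclideanSpace ℝ (Fin n)) 1, F y ≠ A ∧ ‖y - x‖ ≤ Δ)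
    -- A3
    (hC : 0 < C)
    (hbound : ∀ x ∈ closedBall xA rA,
      pA x ≤ C / ((volume (closedBall (0 : EuclideanSpace ℝ (Fin n)) 1)).toReal * rA ^ n))
    (hmass : ν ≤ ∫ x in CA, pA x)
    (hεr : ε < rA) :
    ENNReal.ofReal (PA * max (ν - C * Real.exp (-((n : ℝ) * ε / rA))) 0)
      ≤ μ {q : EuclideanSpace ℝ (Fin n) × L |
            ∃ y ∈ closedBall (0 : EuclideanSpace ℝ (Fin n)) 1,
              F y ≠ F q.1 ∧ ‖q.1 - y‖ ≤ ε + Δ} := by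
  set S := CA \ ball xA (rA - ε)
  have hS_adv : S ×ˢ {A} ⊆ {q : EuclideanSpace ℝ (Fin n) × L |
      ∃ y ∈ closedBall (0 : EuclideanSpace ℝ (Fin n)) 1, F y ≠ F q.1 ∧ ‖q.1 - y‖ ≤ ε + Δ} := by
    rintro ⟨x, l⟩ ⟨⟨hxCA, hxS⟩, -⟩
    exact exists_ne_near_of_forall_sphere hboundary hεr (not_lt.1 hxS) (hCAsub hxCA)
      (hclass x hxCA)
  have h_inner : ∫ x in CA ∩ ball xA (rA - ε), pA x ≤ C * Real.exp (-((n : ℝ) * ε / rA)) := by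
    have := setIntegral_le_exp_of_subset_closedBall volume hrA0 hεr.le hC.le
      (Set.inter_subset_right.trans (ball_subset_closedBall (x := xA))) fun x hx => by
        rw [Real.norm_of_nonneg (hpApos x), finrank_euclideanSpace_fin]
        exact hbound x (hCAsub hx.1)
    rwa [finrank_euclideanSpace_fin] at this
  have h_split := integral_inter_add_sdiff (measurableSet_ball (x := xA) (ε := rA - ε))
    (hpAint.integrableOn (s := CA))
  have hS_mass : max (ν - C * Real.exp (-((n : ℝ) * ε / rA))) 0 ≤ ∫ x in S, pA x :=
    max_le (by linarith) (setIntegral_nonneg (hCAmeas.diff measurableSet_ball) fun x _ => hpApos x)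
  calc ENNReal.ofReal (PA * max (ν - C * Real.exp (-((n : ℝ) * ε / rA))) 0)
      ≤ ENNReal.ofReal (PA * ∫ x in S, pA x) :=
        ENNReal.ofReal_le_ofReal (mul_le_mul_of_nonneg_left hS_mass (hPA ▸ ENNReal.toReal_nonneg))
    _ = μ (S ×ˢ {A}) := (hdens S (hCAmeas.diff measurableSet_ball)).symm
    _ ≤ _ := measure_mono hS_adv

/-- Theorem 1 (existence of adversarial examples). Under assumptions A1–A3, for any
`ε ∈ (0, r_A)`, the probability that a sample `(x, l)` admits an `(ε+Δ)`-adversarial example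
is at least `P(A) · max {ν − C exp(−nε/r_A), 0}`. -/
theorem stmt_5 (n : ℕ) (hn : 1 ≤ n)
    (L : Type*) [MeasurableSpace L] (A : L)
    (F : EuclideanSpace ℝ (Fin n) → L)
    (μ : Measure (EuclideanSpace ℝ (Fin n) × L)) [IsProbabilityMeasure μ]
    (pA : EuclideanSpace ℝ (Fin n) → ℝ) (PA : ℝ)
    (xA : EuclideanSpace ℝ (Fin n)) (CA : Set (EuclideanSpace ℝ (Fin n)))
    (C rA ν Δ ε : ℝ)
    -- the marginal probability of label `A` and the conditional density of `x` given `l = A`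
    (hPA : PA = (μ ((Set.univ : Set (EuclideanSpace ℝ (Fin n))) ×ˢ {A})).toReal)
    (hpAmeas : Measurable pA) (hpApos : ∀ x, 0 ≤ pA x) (hpAint : Integrable pA)
    (hpAprob : ∫ x, pA x = 1)
    (hdens : ∀ S : Set (EuclideanSpace ℝ (Fin n)), MeasurableSet S →
      μ (S ×ˢ {A}) = ENNReal.ofReal (PA * ∫ x in S, pA x))
    -- A1
    (hxA : xA ∈ closedBall (0 : EuclideanSpace ℝ (Fin n)) 1)
    (hrA0 : 0 < rA) (hrA1 : rA < 1) (hCAsub : CA ⊆ closedBall xA rA)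
    (hCAmeas : MeasurableSet CA)
    -- A2
    (hclass : ∀ x ∈ CA, F x = A) (hΔ : 0 < Δ)
    (hboundary : ∀ x ∈ sphere xA rA,
      ∃ y ∈ closedBall (0 : EuclideanSpace ℝ (Fin n)) 1, F y ≠ A ∧ ‖y - x‖ ≤ Δ)
    -- A3
    (hC : 0 < C) (hν0 : 0 < ν) (hν1 : ν ≤ 1)
    (hbound : ∀ x ∈ closedBall xA rA,
      pA x ≤ C / ((volume (closedBall (0 : EuclideanSpace ℝ (Fin n)) 1)).toReal * rA ^ n))
    (hmass : ν ≤ ∫ x in CA, pA x)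
    (hε : 0 < ε) (hεr : ε < rA) :
    ENNReal.ofReal (PA * max (ν - C * Real.exp (-((n : ℝ) * ε / rA))) 0)
      ≤ μ {q : EuclideanSpace ℝ (Fin n) × L |
            ∃ y ∈ closedBall (0 : EuclideanSpace ℝ (Fin n)) 1,
              F y ≠ F q.1 ∧ ‖q.1 - y‖ ≤ ε + Δ} :=
  stmt_5_general n L A F μ pA PA xA CA C rA ν Δ ε hPA hpApos hpAint hdens hrA0 hCAsub hCAmeas hclass
    hboundary hC hbound hmass hεr
end

section
/- Let x' be drawn from the uniform distribution on the unit ball B_n in R^n, let x_1, …, x_M be M fixed points in B_n, and let γ ∈ (1/2, 1). Then the probability that γ‖x'‖² > (x', x_i) for all i = 1, …, M is at least 1 − M (1/(2γ))^n. -/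
open MeasureTheory Metric ProbabilityTheory
open scoped RealInnerProductSpace

/-!
If `γ ‖x‖² ≤ ⟪x, v⟫`, completing the square gives `‖x - v / (2γ)‖ ≤ ‖v‖ / (2γ)`. So for `‖vᵢ‖ ≤ 1`
the points violating one of the `M` strict inequalities lie in `M` balls of radius `1 / (2γ)`,
each of which has volume `(1 / (2γ))ⁿ` times that of the unit ball; the union bound finishes.
-/

section InnerProductSpace

variable {E : Type*} [NormedAddCommGroup E] [InnerProductSpace ℝ E]

theorem norm_sub_inv_two_mul_smul_le {γ : ℝ} (hγ : 0 < γ) {x v : E}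
    (h : γ * ‖x‖ ^ 2 ≤ ⟪x, v⟫) : ‖x - (2 * γ)⁻¹ • v‖ ≤ (2 * γ)⁻¹ * ‖v‖ := by
  set c := (2 * γ)⁻¹
  have hc : 0 < c := by positivity
  have hcγ : 2 * c * γ = 1 := by simp only [c]; field_simp
  have hx : ‖x‖ ^ 2 ≤ 2 * c * ⟪x, v⟫ := by nlinarith
  have hsq : ‖x - c • v‖ ^ 2 ≤ (c * ‖v‖) ^ 2 := by
    rw [norm_sub_sq_real, real_inner_smul_right, norm_smul, Real.norm_of_nonneg hc.le]
    linarith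
  exact (pow_le_pow_iff_left₀ (norm_nonneg _) (by positivity) two_ne_zero).1 hsq

theorem compl_setOf_forall_inner_lt_subset_iUnion_closedBall {ι : Type*} {γ : ℝ} (hγ : 0 < γ)
    {v : ι → E} (hv : ∀ i, v i ∈ closedBall (0 : E) 1) :
    {x : E | ∀ i, γ * ‖x‖ ^ 2 > ⟪x, v i⟫}ᶜ ⊆ ⋃ i, closedBall ((2 * γ)⁻¹ • v i) (2 * γ)⁻¹ := by
  intro x hx
  simp only [Set.mem_compl_iff, Set.mem_ofPred_eq, not_forall, not_lt] at hx
  obtain ⟨i, hi⟩ := hx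
  refine Set.mem_iUnion.2 ⟨i, mem_closedBall_iff_norm.2 ?_⟩
  calc ‖x - (2 * γ)⁻¹ • v i‖ ≤ (2 * γ)⁻¹ * ‖v i‖ := norm_sub_inv_two_mul_smul_le hγ hi
    _ ≤ (2 * γ)⁻¹ * 1 := by gcongr; exact mem_closedBall_zero_iff.1 (hv i)
    _ = (2 * γ)⁻¹ := mul_one _

end InnerProductSpace

theorem measure_iUnion_closedBall_le {E : Type*} [NormedAddCommGroup E] [NormedSpace ℝ E]
    [MeasurableSpace E] [BorelSpace E] [FiniteDimensional ℝ E] (μ : Measure E)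
    [μ.IsAddHaarMeasure] {ι : Type*} [Fintype ι] (c : ι → E) {r : ℝ} (hr : 0 ≤ r) :
    μ (⋃ i, closedBall (c i) r) ≤
      Fintype.card ι * ENNReal.ofReal (r ^ Module.finrank ℝ E) * μ (closedBall 0 1) := by
  refine (measure_iUnion_fintype_le μ _).trans_eq ?_
  simp only [Measure.addHaar_closedBall' μ _ hr, Finset.sum_const, Finset.card_univ,
    nsmul_eq_mul, mul_assoc]

theorem one_sub_le_cond_apply {Ω : Type*} [MeasurableSpace Ω] {μ : Measure Ω} {K s : Set Ω}
    (hK₀ : μ K ≠ 0) (hK : μ K ≠ ⊤) {ε : ENNReal} (h : μ sᶜ ≤ ε * μ K) : 1 - ε ≤ μ[s|K] := by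
  have := cond_isProbabilityMeasure_of_finite hK₀ hK
  have hcompl : μ[sᶜ|K] ≤ ε :=
    calc μ[sᶜ|K] = (μ K)⁻¹ * μ.restrict K sᶜ := rfl
      _ ≤ (μ K)⁻¹ * (ε * μ K) := by gcongr; exact (Measure.restrict_apply_le _ _).trans h
      _ = ε := by rw [mul_comm ε, ← mul_assoc, ENNReal.inv_mul_cancel hK₀ hK, one_mul]
  calc 1 - ε ≤ 1 - μ[sᶜ|K] := tsub_le_tsub_left hcompl _
    _ ≤ μ[s|K] := by
      rw [tsub_le_iff_right, ← measure_univ (μ := μ[|K])]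
      exact measure_univ_le_add_compl s

theorem stmt_8_general (n : ℕ) (M : ℕ) (γ : ℝ) (hγ1 : 1 / 2 < γ)
    (v : Fin M → EuclideanSpace ℝ (Fin n))
    (hv : ∀ i, v i ∈ closedBall (0 : EuclideanSpace ℝ (Fin n)) 1) :
    1 - (M : ENNReal) * ENNReal.ofReal ((1 / (2 * γ)) ^ n) ≤
      ((volume (closedBall (0 : EuclideanSpace ℝ (Fin n)) 1))⁻¹ •
          volume.restrict (closedBall (0 : EuclideanSpace ℝ (Fin n)) 1))
        {x' : EuclideanSpace ℝ (Fin n) | ∀ i, γ * ‖x'‖ ^ 2 > ⟪x', v i⟫} := by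
  have hγ : 0 < γ := by linarith
  refine one_sub_le_cond_apply (measure_closedBall_pos _ _ one_pos).ne'
    measure_closedBall_lt_top.ne ?_
  calc volume {x' : EuclideanSpace ℝ (Fin n) | ∀ i, γ * ‖x'‖ ^ 2 > ⟪x', v i⟫}ᶜ
      ≤ volume (⋃ i, closedBall ((2 * γ)⁻¹ • v i) (2 * γ)⁻¹) :=
        measure_mono (compl_setOf_forall_inner_lt_subset_iUnion_closedBall hγ hv)
    _ ≤ _ := measure_iUnion_closedBall_le volume _ (by positivity)
    _ = _ := by rw [finrank_euclideanSpace_fin, Fintype.card_fin, one_div]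

/-- Separation estimate: for `x'` uniform on the unit ball and fixed points
`x_1, …, x_M` in the ball, the probability that `γ‖x'‖² > ⟪x', x_i⟫` for all `i`
is at least `1 − M (1/(2γ))^n`. -/
theorem stmt_8 (n : ℕ) (M : ℕ) (γ : ℝ) (hγ1 : 1 / 2 < γ) (hγ2 : γ < 1)
    (v : Fin M → EuclideanSpace ℝ (Fin n))
    (hv : ∀ i, v i ∈ closedBall (0 : EuclideanSpace ℝ (Fin n)) 1) :
    1 - (M : ENNReal) * ENNReal.ofReal ((1 / (2 * γ)) ^ n) ≤
      ((volume (closedBall (0 : EuclideanSpace ℝ (Fin n)) 1))⁻¹ •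
          volume.restrict (closedBall (0 : EuclideanSpace ℝ (Fin n)) 1))
        {x' : EuclideanSpace ℝ (Fin n) | ∀ i, γ * ‖x'‖ ^ 2 > ⟪x', v i⟫} :=
  stmt_8_general n M γ hγ1 v hv
end

section
/- (ReLU stealth attack) Let F : B_n → R, let x' ≠ 0 in B_n, and let V ⊆ B_n be finite with γ‖x'‖² > (x', v) for all v ∈ V, γ ∈ (0,1). Define F_a(x) = F(x) + D·ReLU((x, κx') − b) with b = κ((1+γ)/2)‖x'‖², κ > 0, and D = Δ / (κ((1−γ)/2)‖x'‖²) for a given Δ > 0. Then F_a(v) = F(v) for every v ∈ V, and F_a(x') = F(x') + Δ. -/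
open Metric
open scoped RealInnerProductSpace

/-!
The threshold `b` sits halfway between `κ γ ‖x'‖²`, which bounds `⟪v, κx'⟫` on `V`, and
`κ ‖x'‖² = ⟪x', κx'⟫`. Hence the added neuron is inactive on `V`, while at `x'` its
pre-activation is `κ ((1 - γ) / 2) ‖x'‖² > 0`, which the output weight `D` rescales to `Δ`.
-/

section ReLUNeuron

variable {E : Type*} [NormedAddCommGroup E] [InnerProductSpace ℝ E]

lemma inner_smul_sub_mul_norm_sq (x v : E) (κ c : ℝ) :
    ⟪v, κ • x⟫ - κ * c * ‖x‖ ^ 2 = κ * (⟪x, v⟫ - c * ‖x‖ ^ 2) := by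
  rw [real_inner_smul_right, real_inner_comm]
  ring

lemma relu_inner_smul_sub_eq_zero {x v : E} {κ γ : ℝ} (hκ : 0 ≤ κ) (hγ : γ ≤ 1)
    (hv : ⟪x, v⟫ < γ * ‖x‖ ^ 2) :
    max (⟪v, κ • x⟫ - κ * ((1 + γ) / 2) * ‖x‖ ^ 2) 0 = 0 := by
  have hle : ⟪x, v⟫ ≤ (1 + γ) / 2 * ‖x‖ ^ 2 := by nlinarith [sq_nonneg ‖x‖]
  rw [inner_smul_sub_mul_norm_sq, max_eq_right]
  exact mul_nonpos_of_nonneg_of_nonpos hκ (by linarith)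

lemma relu_inner_smul_sub_self {x : E} {κ γ : ℝ} (hκ : 0 ≤ κ) (hγ : γ ≤ 1) :
    max (⟪x, κ • x⟫ - κ * ((1 + γ) / 2) * ‖x‖ ^ 2) 0 = κ * ((1 - γ) / 2) * ‖x‖ ^ 2 := by
  have hself : ⟪x, κ • x⟫ - κ * ((1 + γ) / 2) * ‖x‖ ^ 2 = κ * ((1 - γ) / 2) * ‖x‖ ^ 2 := by
    rw [inner_smul_sub_mul_norm_sq, real_inner_self_eq_norm_sq]
    ring
  rw [hself, max_eq_left]
  have : 0 ≤ (1 - γ) / 2 := by linarith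
  positivity

end ReLUNeuron

theorem stmt_10_general (n : ℕ) (F : EuclideanSpace ℝ (Fin n) → ℝ)
    (x' : EuclideanSpace ℝ (Fin n))
    (hx0 : x' ≠ 0)
    (V : Finset (EuclideanSpace ℝ (Fin n)))
    (γ κ Δ : ℝ) (hγ1 : γ < 1) (hκ : 0 < κ)
    (hsep : ∀ v ∈ V, γ * ‖x'‖ ^ 2 > ⟪x', v⟫)
    (b D : ℝ) (hb : b = κ * ((1 + γ) / 2) * ‖x'‖ ^ 2)
    (hD : D = Δ / (κ * ((1 - γ) / 2) * ‖x'‖ ^ 2))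
    (Fa : EuclideanSpace ℝ (Fin n) → ℝ)
    (hFa : ∀ x, Fa x = F x + D * max (⟪x, κ • x'⟫ - b) 0) :
    (∀ v ∈ V, Fa v = F v) ∧ Fa x' = F x' + Δ := by
  subst hb
  refine ⟨fun v hv => ?_, ?_⟩
  · rw [hFa, relu_inner_smul_sub_eq_zero hκ.le hγ1.le (hsep v hv), mul_zero, add_zero]
  · have hpos : 0 < κ * ((1 - γ) / 2) * ‖x'‖ ^ 2 := by
      have : 0 < (1 - γ) / 2 := by linarith
      have : 0 < ‖x'‖ := norm_pos_iff.mpr hx0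
      positivity
    rw [hFa, relu_inner_smul_sub_self hκ.le hγ1.le, hD, div_mul_cancel₀ _ hpos.ne']

/-- ReLU stealth attack: with `b = κ((1+γ)/2)‖x'‖²` and
`D = Δ / (κ((1−γ)/2)‖x'‖²)`, the modified map
`F_a(x) = F(x) + D·ReLU(⟪x, κx'⟫ − b)` coincides with `F` on the verification set `V`
and satisfies `F_a(x') = F(x') + Δ`. -/
theorem stmt_10 (n : ℕ) (F : EuclideanSpace ℝ (Fin n) → ℝ)
    (x' : EuclideanSpace ℝ (Fin n))
    (hx' : x' ∈ closedBall (0 : EuclideanSpace ℝ (Fin n)) 1) (hx0 : x' ≠ 0)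
    (V : Finset (EuclideanSpace ℝ (Fin n)))
    (hV : ∀ v ∈ V, (v : EuclideanSpace ℝ (Fin n)) ∈ closedBall (0 : EuclideanSpace ℝ (Fin n)) 1)
    (γ κ Δ : ℝ) (hγ0 : 0 < γ) (hγ1 : γ < 1) (hκ : 0 < κ) (hΔ : 0 < Δ)
    (hsep : ∀ v ∈ V, γ * ‖x'‖ ^ 2 > ⟪x', v⟫)
    (b D : ℝ) (hb : b = κ * ((1 + γ) / 2) * ‖x'‖ ^ 2)
    (hD : D = Δ / (κ * ((1 - γ) / 2) * ‖x'‖ ^ 2))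
    (Fa : EuclideanSpace ℝ (Fin n) → ℝ)
    (hFa : ∀ x, Fa x = F x + D * max (⟪x, κ • x'⟫ - b) 0) :
    (∀ v ∈ V, Fa v = F v) ∧ Fa x' = F x' + Δ :=
  stmt_10_general n F x' hx0 V γ κ Δ hγ1 hκ hsep b D hb hD Fa hFa
end

section
/- (Stealth attack, Theorem 2) Let F : B_n → R, let V ⊆ B_n be a finite set of cardinality at most M, let ε > 0, Δ > 0, γ ∈ (1/2, 1), and let g be either ReLU or the logistic sigmoid. Let x' be drawn uniformly from B_n, and define F_a(x) = F(x) + D·g((x, κx') − b) with b = κ((1+γ)/2)‖x'‖², where κ, D > 0 are chosen so that D·g(−κ((1−γ)/2)‖x'‖²) ≤ ε and D·g(κ((1−γ)/2)‖x'‖²) ≥ Δ. Then with probability at least 1 − M(1/(2γ))^n over the draw of x', it holds that |F_a(v) − F(v)| ≤ ε for all v ∈ V and F_a(x') ≥ F(x') + Δ. -/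
open MeasureTheory Metric
open scoped RealInnerProductSpace

open ProbabilityTheory Module

/-!
The attack can only fail at `x'` if `⟪v, x'⟫ > γ‖x'‖²` for some `v ∈ V`. Completing the square,
that set is the open ball of radius `‖v‖/(2γ)` about `v/(2γ)`, hence lies in a ball of radius
`1/(2γ)`, which carries a fraction `(2γ)⁻ⁿ` of the volume of the unit ball; a union bound over `V`
gives the probability. Off this event the neuron's argument `⟪v, κx'⟫ - b` is at most
`-κ((1-γ)/2)‖x'‖²` at every `v ∈ V` and equals `κ((1-γ)/2)‖x'‖²` at `x'`, so the two conditions on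
`κ, D` conclude by monotonicity and nonnegativity of `g`.
-/

section Geometry

variable {E : Type*} [NormedAddCommGroup E] [InnerProductSpace ℝ E]

theorem setOf_mul_norm_sq_lt_inner_eq_ball {γ : ℝ} (hγ : 0 < γ) (v : E) :
    {x : E | γ * ‖x‖ ^ 2 < ⟪v, x⟫} = ball ((2 * γ)⁻¹ • v) ((2 * γ)⁻¹ * ‖v‖) := by
  ext x
  have hdist : γ * ‖x - (2 * γ)⁻¹ • v‖ ^ 2 =
      γ * ‖x‖ ^ 2 - ⟪v, x⟫ + γ * ((2 * γ)⁻¹ * ‖v‖) ^ 2 := by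
    rw [norm_sub_sq_real, real_inner_smul_right, norm_smul, Real.norm_of_nonneg (by positivity),
      real_inner_comm]
    field_simp
  rw [Set.mem_ofPred_eq, mem_ball, dist_eq_norm, ← sq_lt_sq₀ (norm_nonneg _) (by positivity),
    ← mul_lt_mul_iff_right₀ hγ (b := ‖_‖ ^ 2), hdist]
  constructor <;> intro h <;> linarith

end Geometry

section UniformBall

variable {E : Type*} [NormedAddCommGroup E] [MeasurableSpace E] [BorelSpace E]

theorem cond_closedBall_zero_one_closedBall_le [NormedSpace ℝ E] [FiniteDimensional ℝ E]
    (μ : Measure E) [μ.IsAddHaarMeasure] (x : E) {r : ℝ} (hr : 0 ≤ r) :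
    μ[closedBall x r | closedBall 0 1] ≤ ENNReal.ofReal (r ^ finrank ℝ E) := by
  have hB : μ (closedBall 0 1) ≠ 0 := (measure_closedBall_pos μ 0 one_pos).ne'
  calc μ[closedBall x r | closedBall 0 1]
      ≤ (μ (closedBall 0 1))⁻¹ * μ (closedBall x r) := by
        rw [cond_apply measurableSet_closedBall]
        gcongr
        exact Set.inter_subset_right
    _ = ENNReal.ofReal (r ^ finrank ℝ E) * ((μ (closedBall 0 1))⁻¹ * μ (closedBall 0 1)) := by
        rw [Measure.addHaar_closedBall' μ x hr]; ring
    _ = ENNReal.ofReal (r ^ finrank ℝ E) := by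
        rw [ENNReal.inv_mul_cancel hB measure_closedBall_lt_top.ne, mul_one]

variable [InnerProductSpace ℝ E] [FiniteDimensional ℝ E] (μ : Measure E) [μ.IsAddHaarMeasure]
  {V : Finset E} {γ : ℝ}

theorem cond_closedBall_zero_one_exists_mul_norm_sq_lt_inner_le (hV : ∀ v ∈ V, ‖v‖ ≤ 1)
    (hγ : 0 < γ) :
    μ[{x | ∃ v ∈ V, γ * ‖x‖ ^ 2 < ⟪v, x⟫} | closedBall 0 1] ≤
      V.card * ENNReal.ofReal ((2 * γ)⁻¹ ^ finrank ℝ E) := by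
  have hball (v) (hv : v ∈ V) :
      {x : E | γ * ‖x‖ ^ 2 < ⟪v, x⟫} ⊆ closedBall ((2 * γ)⁻¹ • v) (2 * γ)⁻¹ := by
    rw [setOf_mul_norm_sq_lt_inner_eq_ball hγ]
    exact ball_subset_closedBall.trans <| closedBall_subset_closedBall <|
      mul_le_of_le_one_right (by positivity) (hV v hv)
  calc μ[{x | ∃ v ∈ V, γ * ‖x‖ ^ 2 < ⟪v, x⟫} | closedBall 0 1]
      = μ[⋃ v ∈ V, {x | γ * ‖x‖ ^ 2 < ⟪v, x⟫} | closedBall 0 1] := by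
        congr 1; ext x; simp
    _ ≤ ∑ v ∈ V, μ[{x | γ * ‖x‖ ^ 2 < ⟪v, x⟫} | closedBall 0 1] := measure_biUnion_finset_le _ _
    _ ≤ ∑ _v ∈ V, ENNReal.ofReal ((2 * γ)⁻¹ ^ finrank ℝ E) := Finset.sum_le_sum fun v hv =>
        (measure_mono (hball v hv)).trans
          (cond_closedBall_zero_one_closedBall_le μ _ (by positivity))
    _ = V.card * ENNReal.ofReal ((2 * γ)⁻¹ ^ finrank ℝ E) := by
        rw [Finset.sum_const, nsmul_eq_mul]

theorem one_sub_le_cond_closedBall_zero_one_forall_inner_le (hV : ∀ v ∈ V, ‖v‖ ≤ 1)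
    (hγ : 0 < γ) :
    1 - V.card * ENNReal.ofReal ((2 * γ)⁻¹ ^ finrank ℝ E) ≤
      μ[{x | ∀ v ∈ V, ⟪v, x⟫ ≤ γ * ‖x‖ ^ 2} | closedBall 0 1] := by
  have := cond_isProbabilityMeasure_of_finite (measure_closedBall_pos μ (0 : E) one_pos).ne'
    measure_closedBall_lt_top.ne
  have hcompl : {x | ∀ v ∈ V, ⟪v, x⟫ ≤ γ * ‖x‖ ^ 2}ᶜ = {x : E | ∃ v ∈ V, γ * ‖x‖ ^ 2 < ⟪v, x⟫} := by
    ext x; simp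
  rw [tsub_le_iff_right, ← measure_univ (μ := μ[|closedBall 0 1])]
  refine (measure_univ_le_add_compl _).trans (add_le_add le_rfl ?_)
  rw [hcompl]
  exact cond_closedBall_zero_one_exists_mul_norm_sq_lt_inner_le μ hV hγ

end UniformBall

theorem stmt_12_general (n : ℕ) (F : EuclideanSpace ℝ (Fin n) → ℝ)
    (V : Finset (EuclideanSpace ℝ (Fin n))) (M : ℕ) (hVcard : V.card ≤ M)
    (hV : ∀ v ∈ V, (v : EuclideanSpace ℝ (Fin n)) ∈ closedBall (0 : EuclideanSpace ℝ (Fin n)) 1)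
    (ε Δ γ : ℝ) (hγ1 : 1 / 2 < γ)
    (g : ℝ → ℝ)
    (hg : g = (fun s => max s 0) ∨ g = fun s => 1 / (1 + Real.exp (-s))) :
    1 - (M : ENNReal) * ENNReal.ofReal ((1 / (2 * γ)) ^ n) ≤
      ((volume (closedBall (0 : EuclideanSpace ℝ (Fin n)) 1))⁻¹ •
          volume.restrict (closedBall (0 : EuclideanSpace ℝ (Fin n)) 1))
        {x' : EuclideanSpace ℝ (Fin n) |
          ∀ κ D : ℝ, 0 < κ → 0 < D →
            D * g (-(κ * ((1 - γ) / 2) * ‖x'‖ ^ 2)) ≤ ε →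
            Δ ≤ D * g (κ * ((1 - γ) / 2) * ‖x'‖ ^ 2) →
            (∀ v ∈ V,
              |(F v + D * g (⟪v, κ • x'⟫ - κ * ((1 + γ) / 2) * ‖x'‖ ^ 2)) - F v| ≤ ε) ∧
            F x' + Δ ≤ F x' + D * g (⟪x', κ • x'⟫ - κ * ((1 + γ) / 2) * ‖x'‖ ^ 2)} := by
  obtain ⟨hg_nonneg, hg_mono⟩ : (∀ s, 0 ≤ g s) ∧ Monotone g := by
    rcases hg with rfl | rfl
    · exact ⟨fun s => le_max_right s 0, fun a b hab => max_le_max hab le_rfl⟩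
    · simp only [one_div]
      exact ⟨Real.sigmoid_nonneg, Real.sigmoid_monotone⟩
  have hprob := one_sub_le_cond_closedBall_zero_one_forall_inner_le volume
    (fun v hv => mem_closedBall_zero_iff.1 (hV v hv)) (by linarith : 0 < γ)
  rw [finrank_euclideanSpace_fin, ← one_div] at hprob
  -- `volume[|closedBall 0 1]` unfolds to the normalised restriction in the statement.
  refine le_trans ?_ (hprob.trans (measure_mono ?_))
  · gcongr
  · intro x hx κ D hκ hD hlow hhigh
    refine ⟨fun v hv => ?_, ?_⟩
    · have hmargin : ⟪v, κ • x⟫ - κ * ((1 + γ) / 2) * ‖x‖ ^ 2 ≤ -(κ * ((1 - γ) / 2) * ‖x‖ ^ 2) := by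
        rw [real_inner_smul_right]
        linarith [mul_le_mul_of_nonneg_left (hx v hv) hκ.le]
      rw [add_sub_cancel_left, abs_of_nonneg (mul_nonneg hD.le (hg_nonneg _))]
      exact (mul_le_mul_of_nonneg_left (hg_mono hmargin) hD.le).trans hlow
    · have hself : ⟪x, κ • x⟫ - κ * ((1 + γ) / 2) * ‖x‖ ^ 2 = κ * ((1 - γ) / 2) * ‖x‖ ^ 2 := by
        rw [real_inner_smul_right, real_inner_self_eq_norm_sq]; ring
      rwa [hself, add_le_add_iff_left]

/-- Theorem 2 (stealth attack). For `x'` drawn uniformly from the unit ball, with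
probability at least `1 − M(1/(2γ))^n` the single-neuron modification
`F_a(x) = F(x) + D·g(⟪x, κx'⟫ − b)`, `b = κ((1+γ)/2)‖x'‖²`, where `g` is ReLU or the
logistic sigmoid and `κ, D > 0` satisfy `D·g(−κ((1−γ)/2)‖x'‖²) ≤ ε` and
`D·g(κ((1−γ)/2)‖x'‖²) ≥ Δ`, changes `F` by at most `ε` on the verification set `V`
(of cardinality at most `M`) while `F_a(x') ≥ F(x') + Δ`. -/
theorem stmt_12 (n : ℕ) (F : EuclideanSpace ℝ (Fin n) → ℝ)
    (V : Finset (EuclideanSpace ℝ (Fin n))) (M : ℕ) (hVcard : V.card ≤ M)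
    (hV : ∀ v ∈ V, (v : EuclideanSpace ℝ (Fin n)) ∈ closedBall (0 : EuclideanSpace ℝ (Fin n)) 1)
    (ε Δ γ : ℝ) (hε : 0 < ε) (hΔ : 0 < Δ) (hγ1 : 1 / 2 < γ) (hγ2 : γ < 1)
    (g : ℝ → ℝ)
    (hg : g = (fun s => max s 0) ∨ g = fun s => 1 / (1 + Real.exp (-s))) :
    1 - (M : ENNReal) * ENNReal.ofReal ((1 / (2 * γ)) ^ n) ≤
      ((volume (closedBall (0 : EuclideanSpace ℝ (Fin n)) 1))⁻¹ •
          volume.restrict (closedBall (0 : EuclideanSpace ℝ (Fin n)) 1))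
        {x' : EuclideanSpace ℝ (Fin n) |
          ∀ κ D : ℝ, 0 < κ → 0 < D →
            D * g (-(κ * ((1 - γ) / 2) * ‖x'‖ ^ 2)) ≤ ε →
            Δ ≤ D * g (κ * ((1 - γ) / 2) * ‖x'‖ ^ 2) →
            (∀ v ∈ V,
              |(F v + D * g (⟪v, κ • x'⟫ - κ * ((1 + γ) / 2) * ‖x'‖ ^ 2)) - F v| ≤ ε) ∧
            F x' + Δ ≤ F x' + D * g (⟪x', κ • x'⟫ - κ * ((1 + γ) / 2) * ‖x'‖ ^ 2)} :=
  stmt_12_general n F V M hVcard hV ε Δ γ hγ1 g hg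
end

section
/- (Stealth attack with bell-shaped activation) Let g : R → R satisfy g(0) = 1, g nonnegative, and g(s) ≤ g(−(1−γ)κ‖x'‖²) for all s ≤ −(1−γ)κ‖x'‖² (e.g., g monotone increasing on (−∞,0]). Let x' ≠ 0 in B_n and V ⊆ B_n finite with γ‖x'‖² > (x', v) for all v ∈ V, γ ∈ (0,1). Define F_a(x) = F(x) + D·g((x, κx') − κ‖x'‖²) with D ≥ Δ and D·g(−κ(1−γ)‖x'‖²) ≤ ε. Then |F_a(v) − F(v)| ≤ ε for all v ∈ V and F_a(x') = F(x') + D ≥ F(x') + Δ. -/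
open Metric
open scoped RealInnerProductSpace

section AttackNeuron

variable {E : Type*} [NormedAddCommGroup E] [InnerProductSpace ℝ E]

lemma inner_smul_self_sub_norm_sq (κ : ℝ) (x : E) : ⟪x, κ • x⟫ - κ * ‖x‖ ^ 2 = 0 := by
  rw [real_inner_smul_right, real_inner_self_eq_norm_sq, sub_self]

lemma inner_smul_sub_norm_sq_le_of_inner_lt {γ κ : ℝ} (hκ : 0 ≤ κ) {x v : E}
    (hv : ⟪x, v⟫ < γ * ‖x‖ ^ 2) :
    ⟪v, κ • x⟫ - κ * ‖x‖ ^ 2 ≤ -((1 - γ) * κ * ‖x‖ ^ 2) := by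
  rw [real_inner_smul_right, real_inner_comm]
  nlinarith [mul_le_mul_of_nonneg_left hv.le hκ]

end AttackNeuron

theorem stmt_15_general (n : ℕ) (F : EuclideanSpace ℝ (Fin n) → ℝ) (g : ℝ → ℝ)
    (x' : EuclideanSpace ℝ (Fin n))
    (V : Finset (EuclideanSpace ℝ (Fin n)))
    (γ κ D Δ ε : ℝ) (hκ : 0 < κ) (hΔ : 0 < Δ)
    (hg0 : g 0 = 1) (hgpos : ∀ s, 0 ≤ g s)
    (hgmono : ∀ s, s ≤ -((1 - γ) * κ * ‖x'‖ ^ 2) → g s ≤ g (-((1 - γ) * κ * ‖x'‖ ^ 2)))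
    (hsep : ∀ v ∈ V, γ * ‖x'‖ ^ 2 > ⟪x', v⟫)
    (hD : Δ ≤ D) (hDg : D * g (-(κ * (1 - γ) * ‖x'‖ ^ 2)) ≤ ε)
    (Fa : EuclideanSpace ℝ (Fin n) → ℝ)
    (hFa : ∀ x, Fa x = F x + D * g (⟪x, κ • x'⟫ - κ * ‖x'‖ ^ 2)) :
    (∀ v ∈ V, |Fa v - F v| ≤ ε) ∧ Fa x' = F x' + D ∧ F x' + Δ ≤ Fa x' := by
  have hD0 : 0 ≤ D := hΔ.le.trans hD
  have hFa_self : Fa x' = F x' + D := by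
    rw [hFa, inner_smul_self_sub_norm_sq, hg0, mul_one]
  refine ⟨fun v hv => ?_, hFa_self, by linarith⟩
  have hgv := hgmono _ (inner_smul_sub_norm_sq_le_of_inner_lt hκ.le (hsep v hv))
  rw [hFa, add_sub_cancel_left, abs_of_nonneg (mul_nonneg hD0 (hgpos _))]
  calc D * g (⟪v, κ • x'⟫ - κ * ‖x'‖ ^ 2)
      ≤ D * g (-((1 - γ) * κ * ‖x'‖ ^ 2)) := mul_le_mul_of_nonneg_left hgv hD0
    _ = D * g (-(κ * (1 - γ) * ‖x'‖ ^ 2)) := by rw [mul_comm (1 - γ) κ]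
    _ ≤ ε := hDg

/-- Stealth attack with a bell-shaped activation `g` (with `g(0) = 1`, `g ≥ 0`, and `g`
bounded on `(−∞, −(1−γ)κ‖x'‖²]` by its value at `−(1−γ)κ‖x'‖²`), bias `b = κ‖x'‖²`:
`|F_a(v) − F(v)| ≤ ε` for all `v ∈ V` and `F_a(x') = F(x') + D ≥ F(x') + Δ`. -/
theorem stmt_15 (n : ℕ) (F : EuclideanSpace ℝ (Fin n) → ℝ) (g : ℝ → ℝ)
    (x' : EuclideanSpace ℝ (Fin n))
    (hx' : x' ∈ closedBall (0 : EuclideanSpace ℝ (Fin n)) 1) (hx0 : x' ≠ 0)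
    (V : Finset (EuclideanSpace ℝ (Fin n)))
    (hV : ∀ v ∈ V, (v : EuclideanSpace ℝ (Fin n)) ∈ closedBall (0 : EuclideanSpace ℝ (Fin n)) 1)
    (γ κ D Δ ε : ℝ) (hγ0 : 0 < γ) (hγ1 : γ < 1) (hκ : 0 < κ) (hΔ : 0 < Δ) (hε : 0 < ε)
    (hg0 : g 0 = 1) (hgpos : ∀ s, 0 ≤ g s)
    (hgmono : ∀ s, s ≤ -((1 - γ) * κ * ‖x'‖ ^ 2) → g s ≤ g (-((1 - γ) * κ * ‖x'‖ ^ 2)))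
    (hsep : ∀ v ∈ V, γ * ‖x'‖ ^ 2 > ⟪x', v⟫)
    (hD : Δ ≤ D) (hDg : D * g (-(κ * (1 - γ) * ‖x'‖ ^ 2)) ≤ ε)
    (Fa : EuclideanSpace ℝ (Fin n) → ℝ)
    (hFa : ∀ x, Fa x = F x + D * g (⟪x, κ • x'⟫ - κ * ‖x'‖ ^ 2)) :
    (∀ v ∈ V, |Fa v - F v| ≤ ε) ∧ Fa x' = F x' + D ∧ F x' + Δ ≤ Fa x' :=
  stmt_15_general n F g x' V γ κ D Δ ε hκ hΔ hg0 hgpos hgmono hsep hD hDg Fa hFa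
end

section
/- For x' drawn uniformly from the unit ball B_n in R^n and a single fixed point v ∈ B_n, the probability that (x', v) ≥ γ‖x'‖² (failure of separation) is at most (1/(2γ))^n for γ ∈ (1/2, 1); consequently, for any γ ∈ (1/2, 1) and any δ ∈ (0,1), if M < δ (2γ)^n then the probability that a uniformly random x' fails to be γ-separated from at least one of M fixed points is less than δ. -/
open MeasureTheory Metric ProbabilityTheory
open scoped RealInnerProductSpace

/-!
Completing the square, `γ‖x‖² ≤ ⟪x, v⟫` with `‖v‖ ≤ 1` forces `‖x - c v‖ ≤ c` for
`c = 1/(2γ)`, so the failure set lies in a ball of radius `c`, whose share of the unit ball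
is `c ^ n`. A union bound over the `M` points then gives `M c ^ n < δ`.
-/

theorem setOf_inner_ge_subset_closedBall {E : Type*} [NormedAddCommGroup E]
    [InnerProductSpace ℝ E] {γ : ℝ} (hγ : 0 < γ) {v : E} (hv : ‖v‖ ≤ 1) :
    {x : E | γ * ‖x‖ ^ 2 ≤ ⟪x, v⟫} ⊆ closedBall ((1 / (2 * γ)) • v) (1 / (2 * γ)) := by
  set c : ℝ := 1 / (2 * γ)
  have hc : 0 < c := by positivity
  have h2cγ : 2 * c * γ = 1 := by simp only [c]; field_simp
  intro x hx
  rw [Set.mem_ofPred_eq] at hx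
  rw [mem_closedBall, dist_eq_norm, ← sq_le_sq₀ (norm_nonneg _) hc.le]
  calc ‖x - c • v‖ ^ 2 = ‖x‖ ^ 2 - 2 * c * ⟪x, v⟫ + c ^ 2 * ‖v‖ ^ 2 := by
        rw [norm_sub_sq_real, real_inner_smul_right, norm_smul, Real.norm_of_nonneg hc.le]
        ring
    _ ≤ ‖x‖ ^ 2 - 2 * c * (γ * ‖x‖ ^ 2) + c ^ 2 * 1 := by
        gcongr
        exact pow_le_one₀ (norm_nonneg v) hv
    _ = c ^ 2 := by linear_combination (-‖x‖ ^ 2) * h2cγ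

theorem cond_closedBall_one_closedBall_le {E : Type*} [NormedAddCommGroup E]
    [NormedSpace ℝ E] [MeasurableSpace E] [BorelSpace E] [FiniteDimensional ℝ E]
    (μ : Measure E) [μ.IsAddHaarMeasure] (x y : E) {r : ℝ} (hr : 0 ≤ r) :
    μ[closedBall y r | closedBall x 1] ≤ ENNReal.ofReal (r ^ Module.finrank ℝ E) := by
  have hunit : μ (closedBall x 1) = μ (closedBall 0 1) := by
    simpa using μ.addHaar_closedBall' x zero_le_one
  have hpos : μ (closedBall (0 : E) 1) ≠ 0 := (measure_closedBall_pos μ 0 one_pos).ne'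
  calc μ[closedBall y r | closedBall x 1]
      = (μ (closedBall 0 1))⁻¹ * μ (closedBall x 1 ∩ closedBall y r) := by
        rw [cond_apply measurableSet_closedBall, hunit]
    _ ≤ (μ (closedBall 0 1))⁻¹ * μ (closedBall y r) := by
        gcongr
        exact Set.inter_subset_right
    _ = ENNReal.ofReal (r ^ Module.finrank ℝ E) := by
        rw [μ.addHaar_closedBall' y hr, mul_comm,
          mul_assoc, ENNReal.mul_inv_cancel hpos measure_closedBall_lt_top.ne, mul_one]

theorem cond_setOf_inner_ge_le {n : ℕ} {γ : ℝ} (hγ : 0 < γ)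
    {v : EuclideanSpace ℝ (Fin n)} (hv : ‖v‖ ≤ 1) :
    volume[{x : EuclideanSpace ℝ (Fin n) | γ * ‖x‖ ^ 2 ≤ ⟪x, v⟫} | closedBall 0 1]
      ≤ ENNReal.ofReal ((1 / (2 * γ)) ^ n) := by
  calc _ ≤ volume[closedBall ((1 / (2 * γ)) • v) (1 / (2 * γ)) | closedBall 0 1] :=
        measure_mono (setOf_inner_ge_subset_closedBall hγ hv)
    _ ≤ ENNReal.ofReal ((1 / (2 * γ)) ^ n) := by
        simpa only [finrank_euclideanSpace_fin] using
          cond_closedBall_one_closedBall_le (volume : Measure (EuclideanSpace ℝ (Fin n))) 0 _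
            (by positivity : (0 : ℝ) ≤ 1 / (2 * γ))

theorem measure_iUnion_lt_ofReal_of_le {α ι : Type*} [MeasurableSpace α] [Fintype ι]
    {μ : Measure α} {s : ι → Set α} {p δ : ℝ} (hp : 0 ≤ p) (hs : ∀ i, μ (s i) ≤ ENNReal.ofReal p)
    (hδ : Fintype.card ι * p < δ) :
    μ (⋃ i, s i) < ENNReal.ofReal δ := by
  calc μ (⋃ i, s i) ≤ ∑ i, μ (s i) := measure_iUnion_fintype_le μ s
    _ ≤ ∑ _i : ι, ENNReal.ofReal p := Finset.sum_le_sum fun i _ => hs i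
    _ = ENNReal.ofReal (Fintype.card ι * p) := by
        rw [Finset.sum_const, Finset.card_univ, nsmul_eq_mul,
          ENNReal.ofReal_mul (Nat.cast_nonneg _), ENNReal.ofReal_natCast]
    _ < ENNReal.ofReal δ :=
        (ENNReal.ofReal_lt_ofReal_iff ((mul_nonneg (Nat.cast_nonneg _) hp).trans_lt hδ)).mpr hδ

theorem stmt_16_general (n : ℕ) (γ : ℝ) (hγ1 : 1 / 2 < γ) :
    (∀ v ∈ closedBall (0 : EuclideanSpace ℝ (Fin n)) 1,
      ((volume (closedBall (0 : EuclideanSpace ℝ (Fin n)) 1))⁻¹ •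
          volume.restrict (closedBall (0 : EuclideanSpace ℝ (Fin n)) 1))
        {x' : EuclideanSpace ℝ (Fin n) | γ * ‖x'‖ ^ 2 ≤ ⟪x', v⟫}
        ≤ ENNReal.ofReal ((1 / (2 * γ)) ^ n)) ∧
    (∀ (M : ℕ) (δ : ℝ), 0 < δ → δ < 1 → (M : ℝ) < δ * (2 * γ) ^ n →
      ∀ v : Fin M → EuclideanSpace ℝ (Fin n),
        (∀ i, v i ∈ closedBall (0 : EuclideanSpace ℝ (Fin n)) 1) →
        ((volume (closedBall (0 : EuclideanSpace ℝ (Fin n)) 1))⁻¹ •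
            volume.restrict (closedBall (0 : EuclideanSpace ℝ (Fin n)) 1))
          {x' : EuclideanSpace ℝ (Fin n) | ∃ i, γ * ‖x'‖ ^ 2 ≤ ⟪x', v i⟫}
          < ENNReal.ofReal δ) := by
  have hγ : 0 < γ := by linarith
  have single : ∀ v ∈ closedBall (0 : EuclideanSpace ℝ (Fin n)) 1,
      volume[{x' : EuclideanSpace ℝ (Fin n) | γ * ‖x'‖ ^ 2 ≤ ⟪x', v⟫} | closedBall 0 1]
        ≤ ENNReal.ofReal ((1 / (2 * γ)) ^ n) :=
    fun v hv => cond_setOf_inner_ge_le hγ (mem_closedBall_zero_iff.mp hv)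
  refine ⟨single, fun M δ _ _ hM v hv => ?_⟩
  have hMδ : (Fintype.card (Fin M) : ℝ) * (1 / (2 * γ)) ^ n < δ := by
    rwa [Fintype.card_fin, div_pow, one_pow, mul_one_div, div_lt_iff₀ (by positivity)]
  rw [Set.ofPred_exists]
  exact measure_iUnion_lt_ofReal_of_le (by positivity) (fun i => single (v i) (hv i)) hMδ

/-- For `x'` uniform on the unit ball and a fixed `v ∈ B_n`, the probability that
`⟪x', v⟫ ≥ γ‖x'‖²` is at most `(1/(2γ))^n`; consequently, if `M < δ(2γ)^n` then a
uniformly random `x'` fails to be `γ`-separated from at least one of `M` fixed points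
with probability less than `δ`. -/
theorem stmt_16 (n : ℕ) (γ : ℝ) (hγ1 : 1 / 2 < γ) (hγ2 : γ < 1) :
    (∀ v ∈ closedBall (0 : EuclideanSpace ℝ (Fin n)) 1,
      ((volume (closedBall (0 : EuclideanSpace ℝ (Fin n)) 1))⁻¹ •
          volume.restrict (closedBall (0 : EuclideanSpace ℝ (Fin n)) 1))
        {x' : EuclideanSpace ℝ (Fin n) | γ * ‖x'‖ ^ 2 ≤ ⟪x', v⟫}
        ≤ ENNReal.ofReal ((1 / (2 * γ)) ^ n)) ∧
    (∀ (M : ℕ) (δ : ℝ), 0 < δ → δ < 1 → (M : ℝ) < δ * (2 * γ) ^ n →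
      ∀ v : Fin M → EuclideanSpace ℝ (Fin n),
        (∀ i, v i ∈ closedBall (0 : EuclideanSpace ℝ (Fin n)) 1) →
        ((volume (closedBall (0 : EuclideanSpace ℝ (Fin n)) 1))⁻¹ •
            volume.restrict (closedBall (0 : EuclideanSpace ℝ (Fin n)) 1))
          {x' : EuclideanSpace ℝ (Fin n) | ∃ i, γ * ‖x'‖ ^ 2 ≤ ⟪x', v i⟫}
          < ENNReal.ofReal δ) :=
  stmt_16_general n γ hγ1
end
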